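/- arXiv:math/0604507 — 2 statements merged into one kernel-verified Lean document; each statement's English description precedes it below -/
import Mathlib

section
/- Let X be a nonempty compact metric space, I a nonempty finite set, and Γ : I → Set (X × X) a family of closed subsets of X × X such that for each i ∈ I both coordinate projections of Γ_i onto X are surjective. Then the topological entropy h(Γ) of the correspondence, defined via ε-separated families of n-orbits, equals the topological entropy (cover entropy with respect to the product uniformity) of the shift map σ restricted to the orbit space X_∞. -/
/-!
Lifting each orbit of an `ε`-separated family of `n`-orbits to a point of `X_∞` (possible since
the first projections are onto) gives a dynamical net for the entourage "first two coordinates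
`ε/2`-close"; conversely, a dynamical `n`-net for "first `m` coordinates `ε`-close" restricts to
an `ε`-separated family of `(n + m)`-orbits. These prefix entourages form a basis of the
uniformity of `X_∞` because `I` is finite and discrete, and a shift by `m` in time does not
change exponential growth rates.
-/

/-- The shift map on pairs of sequences `(x : ℕ → X, j : ℕ → I)`. -/
def corrShift {X I : Type*} (p : (ℕ → X) × (ℕ → I)) : (ℕ → X) × (ℕ → I) :=
  (fun n => p.1 (n + 1), fun n => p.2 (n + 1))

/-- The orbit space `X_∞` of the correspondence with graphs `Γ i`. -/
def orbitSpace {X I : Type*} (Γ : I → Set (X × X)) : Set ((ℕ → X) × (ℕ → I)) :=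
  {p | ∀ n : ℕ, (p.1 n, p.1 (n + 1)) ∈ Γ (p.2 n)}

/-- An `n`-orbit of the correspondence: a pair of sequences `(x, j)` such that
`(x (r-1), x r) ∈ Γ (j r)` for all `1 ≤ r ≤ n` (only the values `x 0, …, x n` and
`j 1, …, j n` are relevant). -/
def IsOrbit {X I : Type*} (Γ : I → Set (X × X)) (n : ℕ) (o : (ℕ → X) × (ℕ → I)) : Prop :=
  ∀ r : ℕ, 1 ≤ r → r ≤ n → (o.1 (r - 1), o.1 r) ∈ Γ (o.2 r)

/-- Two `n`-orbits are `ε`-separated if their index sequences differ at some `1 ≤ r ≤ n`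
or their point sequences are at distance `> ε` at some `0 ≤ r ≤ n`. -/
def IsSeparatedPair {X : Type*} [MetricSpace X] {I : Type*} (ε : ℝ) (n : ℕ)
    (o o' : (ℕ → X) × (ℕ → I)) : Prop :=
  (∃ r : ℕ, 1 ≤ r ∧ r ≤ n ∧ o.2 r ≠ o'.2 r) ∨ ∃ r ≤ n, ε < dist (o.1 r) (o'.1 r)

/-- The topological entropy of the correspondence with graphs `Γ i`, defined as
`sup_{ε > 0} limsup_{n → ∞} (1/n) log (max #(ε-separated family of n-orbits))`. -/
noncomputable def corrEntropy {X : Type*} [MetricSpace X] {I : Type*}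
    (Γ : I → Set (X × X)) : EReal :=
  ⨆ (ε : ℝ) (_ : 0 < ε), Filter.limsup
    (fun n : ℕ =>
      ((Real.log ((sSup {N : ℕ | ∃ F : Finset ((ℕ → X) × (ℕ → I)), F.card = N ∧
          (∀ o ∈ F, IsOrbit Γ n o) ∧
          ∀ o ∈ F, ∀ o' ∈ F, o ≠ o' → IsSeparatedPair ε n o o'} : ℕ) : ℝ) / n : ℝ) : EReal))
    Filter.atTop

open Filter Set Function Dynamics ExpGrowth LinearGrowth Uniformity
open scoped ENNReal

lemma linearGrowthSup_natCast_add (m : ℕ) :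
    linearGrowthSup (fun n : ℕ ↦ ((n + m : ℕ) : EReal)) = 1 := by
  have hid : linearGrowthSup (fun n : ℕ ↦ (n : EReal)) = 1 := by
    simpa using linearGrowthSup_const_mul_self (a := (1 : EReal))
  refine le_antisymm ?_ ?_
  · refine hid ▸ linearGrowthSup_le_of_eventually_le (EReal.natCast_ne_top m) ?_
    exact Eventually.of_forall fun n ↦ by push_cast; rfl
  · exact hid ▸ linearGrowthSup_monotone fun n ↦ by exact_mod_cast n.le_add_right m

lemma expGrowthSup_comp_add_le {u : ℕ → ℝ≥0∞} (hu : ∃ᶠ n in atTop, 1 ≤ u n) (m : ℕ) :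
    expGrowthSup (fun n ↦ u (n + m)) ≤ expGrowthSup u := by
  have h := expGrowthSup_comp_le (v := (· + m)) hu
    (by rw [linearGrowthSup_natCast_add]; exact one_ne_zero)
    (by rw [linearGrowthSup_natCast_add]; exact EReal.coe_ne_top 1) (tendsto_add_atTop_nat m)
  rwa [linearGrowthSup_natCast_add, one_mul] at h

lemma diagonal_mem_uniformity_of_discrete {α : Type*} [UniformSpace α] [DiscreteTopology α]
    [Finite α] : diagonal α ∈ 𝓤 α :=
  nhdsSet_diagonal_eq_uniformity (α := α) ▸ (isOpen_discrete _).mem_nhdsSet.2 subset_rfl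

lemma exists_forall_lt_subset_of_mem_uniformity_pi {α : Type*} [UniformSpace α]
    {U : SetRel (ℕ → α) (ℕ → α)} (hU : U ∈ 𝓤 (ℕ → α)) :
    ∃ m, ∃ V ∈ 𝓤 α, {pq : (ℕ → α) × (ℕ → α) | ∀ k < m, (pq.1 k, pq.2 k) ∈ V} ⊆ U := by
  rw [Pi.uniformity] at hU
  obtain ⟨S, hS, W, hW, -, hUW, -⟩ := mem_iInf'.1 hU
  choose V hV hVW using fun k ↦ mem_comap.1 (hW k)
  obtain ⟨m, hm⟩ := hS.bddAbove
  refine ⟨m + 1, ⋂ k ∈ S, V k, (biInter_mem hS).2 fun k _ ↦ hV k, fun pq hpq ↦ ?_⟩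
  rw [hUW, mem_iInter₂]
  exact fun k hk ↦ hVW k (mem_iInter₂.1 (hpq k (Nat.lt_succ_of_le (hm hk))) k hk)

lemma corrShift_iterate {X I : Type*} (k : ℕ) (p : (ℕ → X) × (ℕ → I)) :
    corrShift^[k] p = (fun t ↦ p.1 (t + k), fun t ↦ p.2 (t + k)) := by
  induction k generalizing p with
  | zero => rfl
  | succ k ih => rw [iterate_succ_apply, ih]; rfl

section PrefixEntourage

variable (X I : Type*) [PseudoMetricSpace X]

def prefixEntourage (m : ℕ) (ε : ℝ) : SetRel ((ℕ → X) × (ℕ → I)) ((ℕ → X) × (ℕ → I)) :=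
  {pq | ∀ k < m, pq.1.2 k = pq.2.2 k ∧ dist (pq.1.1 k) (pq.2.1 k) ≤ ε}

variable {X I}

lemma refl_mem_prefixEntourage {ε : ℝ} (hε : 0 ≤ ε) (m : ℕ) (p : (ℕ → X) × (ℕ → I)) :
    (p, p) ∈ prefixEntourage X I m ε :=
  fun k _ ↦ ⟨rfl, by simpa using hε⟩

lemma mem_prefixEntourage_of_mem_of_mem {m : ℕ} {δ δ' : ℝ} {p q z : (ℕ → X) × (ℕ → I)}
    (hp : (p, z) ∈ prefixEntourage X I m δ) (hq : (q, z) ∈ prefixEntourage X I m δ') :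
    (p, q) ∈ prefixEntourage X I m (δ + δ') := fun k hk ↦
  ⟨(hp k hk).1.trans (hq k hk).1.symm,
    (dist_triangle_right _ _ _).trans (add_le_add (hp k hk).2 (hq k hk).2)⟩

lemma prefixEntourage_mem_uniformity [UniformSpace I] [DiscreteTopology I] [Finite I]
    (m : ℕ) {ε : ℝ} (hε : 0 < ε) : prefixEntourage X I m ε ∈ 𝓤 ((ℕ → X) × (ℕ → I)) := by
  have hI : ∀ k, {pq : ((ℕ → X) × (ℕ → I)) × ((ℕ → X) × (ℕ → I)) |
      pq.1.2 k = pq.2.2 k} ∈ 𝓤 ((ℕ → X) × (ℕ → I)) := fun k ↦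
    ((Pi.uniformContinuous_proj _ k).comp uniformContinuous_snd)
      diagonal_mem_uniformity_of_discrete
  have hX : ∀ k, {pq : ((ℕ → X) × (ℕ → I)) × ((ℕ → X) × (ℕ → I)) |
      dist (pq.1.1 k) (pq.2.1 k) < ε} ∈ 𝓤 ((ℕ → X) × (ℕ → I)) := fun k ↦
    ((Pi.uniformContinuous_proj (fun _ ↦ X) k).comp (uniformContinuous_fst (β := ℕ → I)))
      (Metric.dist_mem_uniformity hε)
  filter_upwards [(biInter_mem (finite_Iio m)).2 fun k _ ↦ inter_mem (hI k) (hX k)] with pq h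
  exact fun k hk ↦ ⟨(mem_iInter₂.1 h k hk).1, (mem_iInter₂.1 h k hk).2.le⟩

lemma exists_prefixEntourage_subset [UniformSpace I]
    {U : SetRel ((ℕ → X) × (ℕ → I)) ((ℕ → X) × (ℕ → I))} (hU : U ∈ 𝓤 ((ℕ → X) × (ℕ → I))) :
    ∃ m : ℕ, ∃ ε > 0, prefixEntourage X I m ε ⊆ U := by
  obtain ⟨u, hu, v, hv, huv⟩ := entourageProd_subset hU
  obtain ⟨mX, VX, hVX, hVXu⟩ := exists_forall_lt_subset_of_mem_uniformity_pi hu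
  obtain ⟨mI, VI, hVI, hVIv⟩ := exists_forall_lt_subset_of_mem_uniformity_pi hv
  obtain ⟨ε, hε, hεVX⟩ := Metric.mem_uniformity_dist.1 hVX
  refine ⟨max mX mI, ε / 2, half_pos hε, fun pq hpq ↦ huv ⟨?_, ?_⟩⟩
  · exact hVXu fun k hk ↦ hεVX <| (hpq k (lt_max_of_lt_left hk)).2.trans_lt (half_lt_self hε)
  · refine hVIv fun k hk ↦ ?_
    change (pq.1.2 k, pq.2.2 k) ∈ VI
    rw [(hpq k (lt_max_of_lt_right hk)).1]
    exact refl_mem_uniformity hVI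

lemma hasBasis_uniformity_prefixEntourage [UniformSpace I] [DiscreteTopology I] [Finite I] :
    (𝓤 ((ℕ → X) × (ℕ → I))).HasBasis (fun mε : ℕ × ℝ ↦ 0 < mε.2)
      (fun mε ↦ prefixEntourage X I mε.1 mε.2) :=
  ⟨fun _ ↦ ⟨fun hU ↦ let ⟨m, ε, hε, h⟩ := exists_prefixEntourage_subset hU; ⟨(m, ε), hε, h⟩,
    fun ⟨mε, hε, h⟩ ↦ mem_of_superset (prefixEntourage_mem_uniformity mε.1 hε) h⟩⟩

lemma prefixEntourage_subset_dynEntourage (m n : ℕ) (ε : ℝ) :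
    prefixEntourage X I (n + m) ε ⊆ dynEntourage corrShift (prefixEntourage X I m ε) n := by
  intro pq h
  rw [mem_dynEntourage]
  intro k hk r hr
  simpa only [corrShift_iterate] using h (r + k) (by omega)

lemma dynEntourage_subset_prefixEntourage (m n : ℕ) (ε : ℝ) :
    dynEntourage corrShift (prefixEntourage X I (m + 1) ε) (n + 1) ⊆
      prefixEntourage X I (n + m + 1) ε := by
  intro pq h t ht
  have := mem_dynEntourage.1 h (min t n) (by omega) (t - min t n) (by omega)
  simpa only [corrShift_iterate, Nat.sub_add_cancel (min_le_left t n)] using this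

lemma refl_mem_dynEntourage_prefixEntourage {ε : ℝ} (hε : 0 ≤ ε) (m n : ℕ)
    (p : (ℕ → X) × (ℕ → I)) : (p, p) ∈ dynEntourage corrShift (prefixEntourage X I m ε) n :=
  mem_dynEntourage.2 fun _ _ ↦ refl_mem_prefixEntourage hε m _

end PrefixEntourage

section Orbits

variable {X I : Type*} {Γ : I → Set (X × X)}

/-- Orbits number their graphs from `1`, points of `orbitSpace Γ` from `0`. -/
def toOrbit (p : (ℕ → X) × (ℕ → I)) : (ℕ → X) × (ℕ → I) :=
  (p.1, fun r ↦ p.2 (r - 1))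

lemma toOrbit_injective : Injective (toOrbit : (ℕ → X) × (ℕ → I) → (ℕ → X) × (ℕ → I)) :=
  fun _ _ h ↦ Prod.ext (congrArg Prod.fst h :)
    (funext fun r ↦ congrFun (congrArg Prod.snd h :) (r + 1))

lemma isOrbit_toOrbit {p : (ℕ → X) × (ℕ → I)} (hp : p ∈ orbitSpace Γ) (n : ℕ) :
    IsOrbit Γ n (toOrbit p) := fun r hr _ ↦ by
  simpa [toOrbit, Nat.sub_add_cancel hr] using hp (r - 1)

def IsLift (n : ℕ) (p o : (ℕ → X) × (ℕ → I)) : Prop :=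
  (∀ r ≤ n, p.1 r = o.1 r) ∧ ∀ r < n, p.2 r = o.2 (r + 1)

lemma exists_mem_orbitSpace_isLift [Nonempty I] (hsurj1 : ∀ i, Prod.fst '' Γ i = univ)
    {n : ℕ} {o : (ℕ → X) × (ℕ → I)} (ho : IsOrbit Γ n o) :
    ∃ p ∈ orbitSpace Γ, IsLift n p o := by
  obtain ⟨i₀⟩ := ‹Nonempty I›
  have hstep : ∀ x, ∃ y, (x, y) ∈ Γ i₀ := fun x ↦ by
    obtain ⟨⟨_, y⟩, hxy, rfl⟩ := (hsurj1 i₀).ge (mem_univ x)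
    exact ⟨y, hxy⟩
  choose g hg using hstep
  set x : ℕ → X := fun r ↦ if r ≤ n then o.1 r else g^[r - n] (o.1 n) with hx_def
  have hx : ∀ r ≥ n, x r = g^[r - n] (o.1 n) := fun r hr ↦ by
    rcases hr.eq_or_lt with rfl | hr
    · simp [hx_def]
    · exact if_neg hr.not_ge
  refine ⟨(x, fun r ↦ if r < n then o.2 (r + 1) else i₀), fun k ↦ ?_,
    fun r hr ↦ if_pos hr, fun r hr ↦ if_pos hr⟩
  rcases lt_or_ge k n with hk | hk
  · simp only [hx_def, if_pos hk.le, if_pos hk, if_pos (Nat.succ_le_of_lt hk)]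
    simpa using ho (k + 1) (by omega) hk
  · simp only [hx k hk, hx (k + 1) (by omega), if_neg hk.not_gt, Nat.sub_add_comm hk,
      iterate_succ_apply']
    exact hg _

lemma orbitSpace_nonempty [Nonempty X] [Nonempty I] (hsurj1 : ∀ i, Prod.fst '' Γ i = univ) :
    (orbitSpace Γ).Nonempty := by
  obtain ⟨x₀⟩ := ‹Nonempty X›
  obtain ⟨i₀⟩ := ‹Nonempty I›
  obtain ⟨p, hp, -⟩ := exists_mem_orbitSpace_isLift hsurj1 (n := 0)
    (o := (fun _ ↦ x₀, fun _ ↦ i₀)) fun r h1 h0 ↦ absurd h0 (by omega)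
  exact ⟨p, hp⟩

end Orbits

section SeparatedPairs

variable {X : Type*} [MetricSpace X] {I : Type*} {ε : ℝ}

lemma not_isSeparatedPair_iff {n : ℕ} {o o' : (ℕ → X) × (ℕ → I)} :
    ¬IsSeparatedPair ε n o o' ↔
      (∀ r, 1 ≤ r → r ≤ n → o.2 r = o'.2 r) ∧ ∀ r ≤ n, dist (o.1 r) (o'.1 r) ≤ ε := by
  simp [IsSeparatedPair]

lemma isSeparatedPair_toOrbit {N : ℕ} {p q : (ℕ → X) × (ℕ → I)}
    (h : (p, q) ∉ prefixEntourage X I N ε) : IsSeparatedPair ε N (toOrbit p) (toOrbit q) := by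
  by_contra hsep
  rw [not_isSeparatedPair_iff] at hsep
  exact h fun k hk ↦ ⟨by simpa [toOrbit] using hsep.1 (k + 1) (by omega) hk, hsep.2 k hk.le⟩

lemma not_isSeparatedPair_of_isLift {n : ℕ} {p q o o' : (ℕ → X) × (ℕ → I)}
    (hp : IsLift n p o) (hq : IsLift n q o') (h : (p, q) ∈ prefixEntourage X I (n + 1) ε) :
    ¬IsSeparatedPair ε n o o' := by
  refine not_isSeparatedPair_iff.2 ⟨fun r hr1 hrn ↦ ?_, fun r hr ↦ ?_⟩
  · have := (h (r - 1) (by omega)).1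
    rwa [hp.2 _ (by omega), hq.2 _ (by omega), Nat.sub_add_cancel hr1] at this
  · simpa only [hp.1 r hr, hq.1 r hr] using (h r (by omega)).2

end SeparatedPairs

section MaxSepCard

variable {X : Type*} [MetricSpace X] {I : Type*} {Γ : I → Set (X × X)} {ε : ℝ}

def IsSeparatedOrbitFamily (Γ : I → Set (X × X)) (ε : ℝ) (n : ℕ)
    (F : Finset ((ℕ → X) × (ℕ → I))) : Prop :=
  (∀ o ∈ F, IsOrbit Γ n o) ∧ (F : Set ((ℕ → X) × (ℕ → I))).Pairwise (IsSeparatedPair ε n)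

noncomputable def maxSepCard (Γ : I → Set (X × X)) (ε : ℝ) (n : ℕ) : ℕ :=
  sSup {N | ∃ F : Finset ((ℕ → X) × (ℕ → I)), F.card = N ∧ IsSeparatedOrbitFamily Γ ε n F}

lemma bddAbove_card_isSeparatedOrbitFamily [CompactSpace X] [Finite I] (hε : 0 < ε) (n : ℕ) :
    BddAbove {N | ∃ F : Finset ((ℕ → X) × (ℕ → I)), F.card = N ∧
      IsSeparatedOrbitFamily Γ ε n F} := by
  classical
  have := Fintype.ofFinite I
  obtain ⟨t, -, ht, hcover⟩ := finite_cover_balls_of_compact (isCompact_univ (X := X)) (half_pos hε)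
  have := ht.fintype
  have hnear : ∀ x : X, ∃ c : t, dist x c < ε / 2 := fun x ↦ by
    obtain ⟨c, hc, hxc⟩ := mem_iUnion₂.1 (hcover (mem_univ x))
    exact ⟨⟨c, hc⟩, hxc⟩
  choose c hc using hnear
  let code (o : (ℕ → X) × (ℕ → I)) : (Fin (n + 1) → t) × (Fin n → I) :=
    (fun r ↦ c (o.1 r), fun r ↦ o.2 (r + 1))
  refine ⟨Fintype.card ((Fin (n + 1) → t) × (Fin n → I)), ?_⟩
  rintro _ ⟨F, rfl, -, hsep⟩
  refine Finset.card_le_card_of_injOn code (fun _ _ ↦ Finset.mem_coe.2 (Finset.mem_univ _))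
    fun o ho o' ho' h ↦ hsep.eq ho ho' <|
      not_isSeparatedPair_iff.2 ⟨fun r hr1 hrn ↦ ?_, fun r hr ↦ ?_⟩
  · have := congrFun (congrArg Prod.snd h) ⟨r - 1, by omega⟩
    simpa [code, Nat.sub_add_cancel hr1] using this
  · have := congrFun (congrArg Prod.fst h) ⟨r, by omega⟩
    simp only [code] at this
    calc dist (o.1 r) (o'.1 r) ≤ dist (o.1 r) (c (o.1 r)) + dist (o'.1 r) (c (o'.1 r)) := by
          rw [this]; exact dist_triangle_right _ _ _
      _ ≤ ε := by linarith [hc (o.1 r), hc (o'.1 r)]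

lemma IsSeparatedOrbitFamily.card_le_maxSepCard [CompactSpace X] [Finite I] (hε : 0 < ε)
    {n : ℕ} {F : Finset ((ℕ → X) × (ℕ → I))} (hF : IsSeparatedOrbitFamily Γ ε n F) :
    F.card ≤ maxSepCard Γ ε n :=
  le_csSup (bddAbove_card_isSeparatedOrbitFamily hε n) ⟨F, rfl, hF⟩

lemma exists_isSeparatedOrbitFamily_card_eq [CompactSpace X] [Finite I] (hε : 0 < ε) (n : ℕ) :
    ∃ F : Finset ((ℕ → X) × (ℕ → I)),
      IsSeparatedOrbitFamily Γ ε n F ∧ F.card = maxSepCard Γ ε n := by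
  have hne : {N | ∃ F : Finset ((ℕ → X) × (ℕ → I)), F.card = N ∧
      IsSeparatedOrbitFamily Γ ε n F}.Nonempty := ⟨0, ∅, rfl, by simp [IsSeparatedOrbitFamily]⟩
  obtain ⟨F, hF, hFsep⟩ := Nat.sSup_mem hne (bddAbove_card_isSeparatedOrbitFamily hε n)
  exact ⟨F, hFsep, hF⟩

lemma one_le_maxSepCard [CompactSpace X] [Nonempty X] [Finite I] [Nonempty I]
    (hsurj1 : ∀ i, Prod.fst '' Γ i = univ) (hε : 0 < ε) (n : ℕ) : 1 ≤ maxSepCard Γ ε n := by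
  obtain ⟨p, hp⟩ := orbitSpace_nonempty hsurj1
  have hF : IsSeparatedOrbitFamily Γ ε n {toOrbit p} :=
    ⟨by simpa using isOrbit_toOrbit hp n, by simp⟩
  simpa using hF.card_le_maxSepCard hε

lemma corrEntropy_eq_iSup_expGrowthSup_maxSepCard [CompactSpace X] [Nonempty X] [Finite I]
    [Nonempty I] (hsurj1 : ∀ i, Prod.fst '' Γ i = univ) :
    corrEntropy Γ = ⨆ (ε : ℝ) (_ : 0 < ε), expGrowthSup fun n ↦ (maxSepCard Γ ε n : ℝ≥0∞) := by
  change ⨆ (ε : ℝ) (_ : 0 < ε),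
    atTop.limsup (fun n : ℕ ↦ ((Real.log (maxSepCard Γ ε n) / n : ℝ) : EReal)) = _
  refine biSup_congr fun ε hε ↦ limsup_congr (Eventually.of_forall fun n ↦ ?_)
  have hpos : (maxSepCard Γ ε n : ℝ≥0∞) ≠ 0 := by
    exact_mod_cast Nat.one_le_iff_ne_zero.1 (one_le_maxSepCard hsurj1 hε n)
  rw [ENNReal.log_pos_real hpos (ENNReal.natCast_ne_top _), EReal.coe_div]
  simp

end MaxSepCard

section Comparison

variable {X : Type*} [MetricSpace X] {I : Type*} {Γ : I → Set (X × X)} {ε : ℝ}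

lemma maxSepCard_le_netMaxcard [CompactSpace X] [Finite I] [Nonempty I]
    (hsurj1 : ∀ i, Prod.fst '' Γ i = univ) (hε : 0 < ε) (n : ℕ) :
    (maxSepCard Γ ε (n + 1) : ℕ∞) ≤
      netMaxcard corrShift (orbitSpace Γ) (prefixEntourage X I 2 (ε / 2)) (n + 1) := by
  classical
  obtain ⟨F, hF, hFcard⟩ := exists_isSeparatedOrbitFamily_card_eq (Γ := Γ) hε (n + 1)
  choose! lift hlift_mem hlift using
    fun o (ho : IsOrbit Γ (n + 1) o) ↦ exists_mem_orbitSpace_isLift hsurj1 ho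
  set D := dynEntourage corrShift (prefixEntourage X I 2 (ε / 2)) (n + 1)
  have hclose : ∀ o ∈ F, ∀ o' ∈ F, ∀ z, (lift o, z) ∈ D → (lift o', z) ∈ D → o = o' := by
    intro o ho o' ho' z hz hz'
    have h := mem_prefixEntourage_of_mem_of_mem (dynEntourage_subset_prefixEntourage 1 n _ hz)
      (dynEntourage_subset_prefixEntourage 1 n _ hz')
    rw [add_halves] at h
    exact hF.2.eq ho ho'
      (not_isSeparatedPair_of_isLift (hlift o (hF.1 o ho)) (hlift o' (hF.1 o' ho')) h)
  have hrefl : ∀ p, (p, p) ∈ D := refl_mem_dynEntourage_prefixEntourage (half_pos hε).le 2 _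
  have hinj : InjOn lift F := fun o ho o' ho' h ↦ hclose o ho o' ho' _ (h ▸ hrefl _) (hrefl _)
  have hnet : IsDynNetIn corrShift (orbitSpace Γ) (prefixEntourage X I 2 (ε / 2)) (n + 1)
      (F.image lift) := by
    refine ⟨fun _ hp ↦ ?_, ?_⟩
    · obtain ⟨o, ho, rfl⟩ := Finset.mem_image.1 hp
      exact hlift_mem o (hF.1 o ho)
    · rw [Finset.coe_image, hinj.pairwiseDisjoint_image]
      exact fun o ho o' ho' hne ↦ disjoint_left.2 fun z hz hz' ↦ hne (hclose o ho o' ho' z hz hz')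
  rw [← hFcard, ← Finset.card_image_of_injOn hinj]
  exact hnet.card_le_netMaxcard

lemma netMaxcard_le_maxSepCard [CompactSpace X] [Finite I] (hε : 0 < ε) (m n : ℕ) :
    netMaxcard corrShift (orbitSpace Γ) (prefixEntourage X I m ε) n ≤ maxSepCard Γ ε (n + m) := by
  classical
  refine iSup₂_le fun s hs ↦ ?_
  have hF : IsSeparatedOrbitFamily Γ ε (n + m) (s.image toOrbit) := by
    refine ⟨fun _ ho ↦ ?_, ?_⟩
    · obtain ⟨p, hp, rfl⟩ := Finset.mem_image.1 ho
      exact isOrbit_toOrbit (hs.1 hp) _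
    · rw [Finset.coe_image]
      rintro _ ⟨p, hp, rfl⟩ _ ⟨q, hq, rfl⟩ hpq
      refine isSeparatedPair_toOrbit fun h ↦ ?_
      refine disjoint_left.1 (hs.2 hp hq fun h ↦ hpq (h ▸ rfl))
        (prefixEntourage_subset_dynEntourage m n ε h)
        (refl_mem_dynEntourage_prefixEntourage hε.le m n q)
  rw [← Finset.card_image_of_injective s toOrbit_injective]
  exact_mod_cast hF.card_le_maxSepCard hε

end Comparison

theorem corrEntropy_eq_coverEntropy_shift_general
    {X : Type*} [MetricSpace X] [CompactSpace X] [Nonempty X]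
    {I : Type*} [UniformSpace I] [DiscreteTopology I] [Finite I] [Nonempty I]
    (Γ : I → Set (X × X))
    (hsurj1 : ∀ i, Prod.fst '' Γ i = Set.univ) :
    corrEntropy Γ = Dynamics.coverEntropy corrShift (orbitSpace Γ) := by
  rw [corrEntropy_eq_iSup_expGrowthSup_maxSepCard hsurj1,
    coverEntropy_eq_iSup_basis_netEntropyEntourage hasBasis_uniformity_prefixEntourage]
  refine le_antisymm (iSup₂_le fun ε hε ↦ ?_) (iSup₂_le fun ⟨m, ε⟩ hε ↦ ?_)
  · refine le_iSup₂_of_le (2, ε / 2) (half_pos hε) (expGrowthSup_eventually_monotone ?_)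
    filter_upwards [eventually_gt_atTop 0] with n hn
    obtain ⟨n, rfl⟩ := Nat.exists_eq_add_one_of_ne_zero hn.ne'
    simpa using ENat.toENNReal_le.2 (maxSepCard_le_netMaxcard hsurj1 hε n)
  · have hpos : ∃ᶠ n in atTop, 1 ≤ (maxSepCard Γ ε n : ℝ≥0∞) :=
      Frequently.of_forall fun n ↦ by exact_mod_cast one_le_maxSepCard hsurj1 hε n
    calc netEntropyEntourage corrShift (orbitSpace Γ) (prefixEntourage X I m ε)
        ≤ expGrowthSup fun n ↦ (maxSepCard Γ ε (n + m) : ℝ≥0∞) :=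
          expGrowthSup_monotone fun n ↦ by
            simpa using ENat.toENNReal_le.2 (netMaxcard_le_maxSepCard hε m n)
      _ ≤ expGrowthSup fun n ↦ (maxSepCard Γ ε n : ℝ≥0∞) := expGrowthSup_comp_add_le hpos m
      _ ≤ _ := le_iSup₂_of_le ε hε le_rfl

/-- For a correspondence on a nonempty compact metric space given by finitely many closed
graphs with surjective projections, the topological entropy defined via `ε`-separated
families of `n`-orbits equals the topological (cover) entropy of the shift map restricted
to the orbit space `X_∞` (with the product uniformity, `I` being discrete). -/
theorem corrEntropy_eq_coverEntropy_shift
    {X : Type*} [MetricSpace X] [CompactSpace X] [Nonempty X]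
    {I : Type*} [UniformSpace I] [DiscreteTopology I] [Finite I] [Nonempty I]
    (Γ : I → Set (X × X)) (hclosed : ∀ i, IsClosed (Γ i))
    (hsurj1 : ∀ i, Prod.fst '' Γ i = Set.univ)
    (hsurj2 : ∀ i, Prod.snd '' Γ i = Set.univ) :
    corrEntropy Γ = Dynamics.coverEntropy corrShift (orbitSpace Γ) :=
  corrEntropy_eq_coverEntropy_shift_general Γ hsurj1
end

section
/- Let X be a nonempty compact metric space, I a nonempty finite set, and Γ : I → Set (X × X) a family of closed subsets of X × X such that for each i ∈ I both coordinate projections of Γ_i onto X are surjective. Define the adjoint family Γ⁻¹ by Γ⁻¹_i := {(y, x) : (x, y) ∈ Γ_i}. Then the topological entropy of the adjoint correspondence equals that of the original correspondence: h(Γ⁻¹) = h(Γ). -/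
/-- The adjoint (transposed) correspondence. -/
def corrAdj {X I : Type*} (Γ : I → Set (X × X)) : I → Set (X × X) :=
  fun i => {q : X × X | (q.2, q.1) ∈ Γ i}

lemma corrAdj_corrAdj {X I : Type*} (Γ : I → Set (X × X)) : corrAdj (corrAdj Γ) = Γ := by
  funext i; ext q; simp [corrAdj]

/-- Time reversal of an `n`-orbit. -/
def corrRev {X I : Type*} (n : ℕ) (o : (ℕ → X) × (ℕ → I)) : (ℕ → X) × (ℕ → I) :=
  (fun r => o.1 (n - r), fun r => o.2 (n + 1 - r))

lemma corrSep_subset {X : Type*} [MetricSpace X] {I : Type*} (Γ : I → Set (X × X))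
    {ε : ℝ} (hε : 0 < ε) (n : ℕ) :
    {N : ℕ | ∃ F : Finset ((ℕ → X) × (ℕ → I)), F.card = N ∧
        (∀ o ∈ F, IsOrbit (corrAdj Γ) n o) ∧
        ∀ o ∈ F, ∀ o' ∈ F, o ≠ o' → IsSeparatedPair ε n o o'} ⊆
    {N : ℕ | ∃ F : Finset ((ℕ → X) × (ℕ → I)), F.card = N ∧
        (∀ o ∈ F, IsOrbit Γ n o) ∧
        ∀ o ∈ F, ∀ o' ∈ F, o ≠ o' → IsSeparatedPair ε n o o'} := by
  classical
  rintro N ⟨F, hcard, horb, hsep⟩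
  -- reversal preserves separation
  have sep_rev : ∀ o ∈ F, ∀ o' ∈ F, o ≠ o' →
      IsSeparatedPair ε n (corrRev n o) (corrRev n o') := by
    intro o ho o' ho' hne
    rcases hsep o ho o' ho' hne with ⟨r, hr1, hrn, hj⟩ | ⟨r, hrn, hd⟩
    · refine Or.inl ⟨n + 1 - r, by omega, by omega, ?_⟩
      have h : n + 1 - (n + 1 - r) = r := by omega
      simpa [corrRev, h] using hj
    · refine Or.inr ⟨n - r, by omega, ?_⟩
      have h : n - (n - r) = r := by omega
      simpa [corrRev, h] using hd
  have hrev_ne : ∀ o ∈ F, ∀ o' ∈ F, o ≠ o' → corrRev n o ≠ corrRev n o' := by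
    intro o ho o' ho' hne heq
    rcases sep_rev o ho o' ho' hne with ⟨r, _, _, hj⟩ | ⟨r, _, hd⟩
    · exact hj (by rw [heq])
    · rw [heq] at hd; simp at hd; linarith
  have hinj : Set.InjOn (corrRev n) (F : Set ((ℕ → X) × (ℕ → I))) := by
    intro o ho o' ho' heq
    by_contra hne
    exact hrev_ne o ho o' ho' hne heq
  refine ⟨F.image (corrRev n), by rw [Finset.card_image_of_injOn hinj, hcard], ?_, ?_⟩
  · intro p hp
    rcases Finset.mem_image.1 hp with ⟨o, ho, rfl⟩
    intro r hr1 hrn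
    have horbo := horb o ho (n + 1 - r) (by omega) (by omega)
    have h1 : n - (r - 1) = n + 1 - r := by omega
    have h2 : n - r = n + 1 - r - 1 := by omega
    simpa [corrRev, corrAdj, h1, h2] using horbo
  · intro p hp p' hp' hne
    rcases Finset.mem_image.1 hp with ⟨o, ho, rfl⟩
    rcases Finset.mem_image.1 hp' with ⟨o', ho', rfl⟩
    have hne' : o ≠ o' := fun h => hne (by rw [h])
    exact sep_rev o ho o' ho' hne'

lemma corrSep_eq {X : Type*} [MetricSpace X] {I : Type*} (Γ : I → Set (X × X))
    {ε : ℝ} (hε : 0 < ε) (n : ℕ) :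
    {N : ℕ | ∃ F : Finset ((ℕ → X) × (ℕ → I)), F.card = N ∧
        (∀ o ∈ F, IsOrbit (corrAdj Γ) n o) ∧
        ∀ o ∈ F, ∀ o' ∈ F, o ≠ o' → IsSeparatedPair ε n o o'} =
    {N : ℕ | ∃ F : Finset ((ℕ → X) × (ℕ → I)), F.card = N ∧
        (∀ o ∈ F, IsOrbit Γ n o) ∧
        ∀ o ∈ F, ∀ o' ∈ F, o ≠ o' → IsSeparatedPair ε n o o'} := by
  apply Set.Subset.antisymm (corrSep_subset Γ hε n)
  have := corrSep_subset (corrAdj Γ) hε n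
  rwa [corrAdj_corrAdj] at this

/-- For a correspondence on a nonempty compact metric space given by finitely many closed
graphs with surjective projections, the topological entropy of the adjoint correspondence
(given by the transposed relations) equals the topological entropy of the correspondence. -/
theorem corrEntropy_adjoint
    {X : Type*} [MetricSpace X] [CompactSpace X] [Nonempty X]
    {I : Type*} [Finite I] [Nonempty I]
    (Γ : I → Set (X × X)) (hclosed : ∀ i, IsClosed (Γ i))
    (hsurj1 : ∀ i, Prod.fst '' Γ i = Set.univ)
    (hsurj2 : ∀ i, Prod.snd '' Γ i = Set.univ) :
    corrEntropy (fun i => {q : X × X | (q.2, q.1) ∈ Γ i}) = corrEntropy Γ := by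
  have : (fun i => {q : X × X | (q.2, q.1) ∈ Γ i}) = corrAdj Γ := rfl
  rw [this]
  unfold corrEntropy
  refine iSup_congr fun ε => iSup_congr fun hε => ?_
  congr 1
  funext n
  rw [corrSep_eq Γ hε n]
end
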